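/- arXiv:math/0408011 — 2 statements merged into one kernel-verified Lean document; each statement's English description precedes it below -/
import Mathlib

section
/- Let ⟨r⁻, r⁺⟩ be a combinatorial characteristic ray pair of period n with itinerary (u_1 … u_n)^∞. Then for every s ∈ Ṡ the following are equivalent: (i) r⁻ < s < r⁺; (ii) itin_s(r⁻) = itin_s(r⁺) = (u_1 … u_n)^∞; (iii) itin_s(r⁻) = itin_s(r⁺). -/
noncomputable section

/-- Entries of an address: a real number or `∞`. -/
abbrev Entry : Type := WithTop ℝ

/-- An address is a sequence of entries. -/
abbrev Addr : Type := ℕ → Entry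

/-- The address `∞` (all of whose entries are infinite). -/
def topAddr : Addr := fun _ => ⊤

/-- The shift map `σ`, deleting the first entry. -/
def shift (a : Addr) : Addr := fun k => a (k + 1)

/-- The iterated shift `σ^k`. -/
def shiftIter (a : Addr) (k : ℕ) : Addr := fun j => a (j + k)

/-- `σ^k(a)` is defined (all earlier iterates differ from `∞`). -/
def shiftDef (a : Addr) (k : ℕ) : Prop := ∀ j, j < k → shiftIter a j ≠ topAddr

/-- Prepending an entry to an address. -/
def consAddr (x : Entry) (a : Addr) : Addr := fun k => if k = 0 then x else a (k - 1)

/-- The lexicographic (strict) order on addresses. -/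
def addrLt (a b : Addr) : Prop := ∃ k, (∀ j, j < k → a j = b j) ∧ a k < b k

/-- The lexicographic order on addresses. -/
def addrLe (a b : Addr) : Prop := addrLt a b ∨ a = b

/-- Infinite external addresses: all entries are integers. -/
def IsExtAddr (a : Addr) : Prop := ∀ k, ∃ m : ℤ, a k = ((m : ℝ) : Entry)

/-- Intermediate external addresses of length `n ≥ 1`: the first `n - 2` entries are
integers, the `(n-1)`-st entry lies in `ℤ + 1/2`, and all further entries are `∞`
(for `n = 1` this is the address `∞` itself). -/
def IsIntermediate (a : Addr) (n : ℕ) : Prop :=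
  1 ≤ n ∧ (∀ k, k + 2 < n → ∃ m : ℤ, a k = ((m : ℝ) : Entry)) ∧
    (∀ k, k + 2 = n → ∃ m : ℤ, a k = (((m : ℝ) + 1 / 2 : ℝ) : Entry)) ∧
    (∀ k, n ≤ k + 1 → a k = ⊤)

/-- Membership in `Ṡ`: infinite external addresses and intermediate ones of length `≥ 2`. -/
def InSDot (a : Addr) : Prop := IsExtAddr a ∨ ∃ n, 2 ≤ n ∧ IsIntermediate a n

/-- Membership in `S̄ = Ṡ ∪ {∞}`. -/
def InSBar (a : Addr) : Prop := InSDot a ∨ a = topAddr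

/-- `a` is periodic of (exact) period `n`. -/
def PeriodicAddr (a : Addr) (n : ℕ) : Prop :=
  1 ≤ n ∧ shiftIter a n = a ∧ ∀ m, 1 ≤ m → m < n → shiftIter a m ≠ a

/-- Itinerary entries: integers `j`, boundary symbols `[j/(j-1)]` (encoded `bdy j`),
or the symbol `*`. -/
inductive ItinEntry : Type
  | int : ℤ → ItinEntry
  | bdy : ℤ → ItinEntry
  | star : ItinEntry
  deriving DecidableEq

open scoped Classical in
/-- The itinerary `itin_s(r)`; position `k` holds the entry `u_{k+1}` of the paper:
`u_{k+1} = j` if `js < σ^k(r) < (j+1)s`, the boundary symbol `[j/(j-1)]` if `σ^k(r) = js`,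
and `*` if `σ^k(r) = ∞`. -/
def itin (s r : Addr) : ℕ → ItinEntry := fun k =>
  if shiftIter r k = topAddr then ItinEntry.star
  else if h : ∃ j : ℤ, shiftIter r k = consAddr ((j : ℝ) : Entry) s then ItinEntry.bdy h.choose
  else if h : ∃ j : ℤ, addrLt (consAddr ((j : ℝ) : Entry) s) (shiftIter r k) ∧
      addrLt (shiftIter r k) (consAddr (((j + 1 : ℤ) : ℝ) : Entry) s) then ItinEntry.int h.choose
  else ItinEntry.star

/-- Replace each boundary symbol `[j/(j-1)]` by `j`. -/
def entryPlus : ItinEntry → ItinEntry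
  | ItinEntry.bdy j => ItinEntry.int j
  | e => e

/-- Replace each boundary symbol `[j/(j-1)]` by `j - 1`. -/
def entryMinus : ItinEntry → ItinEntry
  | ItinEntry.bdy j => ItinEntry.int (j - 1)
  | e => e

/-- The itinerary `itin⁺_s(r)`. -/
def itinPlus (s r : Addr) : ℕ → ItinEntry := fun k => entryPlus (itin s r k)

/-- The itinerary `itin⁻_s(r)`. -/
def itinMinus (s r : Addr) : ℕ → ItinEntry := fun k => entryMinus (itin s r k)

/-- The periodic itinerary `(u_1 … u_n)^∞` (with `u_i` encoded as `u (i - 1)`). -/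
def perItin (u : ℕ → ℤ) (n : ℕ) : ℕ → ItinEntry := fun k => ItinEntry.int (u (k % n))

/-- The finite itinerary word `u_1 … u_{n-1} *` (star from position `n - 1` onwards). -/
def finWord (u : ℕ → ℤ) (n : ℕ) : ℕ → ItinEntry := fun k =>
  if k + 1 < n then ItinEntry.int (u k) else ItinEntry.star

/-- A combinatorial characteristic ray pair of period `n` with itinerary `(u_1 … u_n)^∞`. -/
def CharRayPair (rm rp : Addr) (n : ℕ) (u : ℕ → ℤ) : Prop :=
  IsExtAddr rm ∧ IsExtAddr rp ∧ PeriodicAddr rm n ∧ PeriodicAddr rp n ∧ addrLt rm rp ∧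
    (∀ k, 1 ≤ k → ¬(addrLt rm (shiftIter rm k) ∧ addrLt (shiftIter rm k) rp)) ∧
    (∀ k, 1 ≤ k → ¬(addrLt rm (shiftIter rp k) ∧ addrLt (shiftIter rp k) rp)) ∧
    itinMinus rm rm = perItin u n ∧ itinMinus rm rp = perItin u n ∧
    addrLt (shiftIter rp (n - 1)) (shiftIter rm (n - 1))

section Aux

lemma addrLt_irrefl (a : Addr) : ¬ addrLt a a := by
  rintro ⟨k, -, hk⟩; exact lt_irrefl _ hk

lemma addrLt_trans {a b c : Addr} (h1 : addrLt a b) (h2 : addrLt b c) : addrLt a c := by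
  obtain ⟨k1, e1, l1⟩ := h1
  obtain ⟨k2, e2, l2⟩ := h2
  rcases lt_trichotomy k1 k2 with h | h | h
  · exact ⟨k1, fun j hj => (e1 j hj).trans (e2 j (hj.trans h)),
      by rw [← e2 k1 h]; exact l1⟩
  · subst h
    exact ⟨k1, fun j hj => (e1 j hj).trans (e2 j hj), l1.trans l2⟩
  · exact ⟨k2, fun j hj => (e1 j (hj.trans h)).trans (e2 j hj),
      by rw [e1 k2 h]; exact l2⟩

lemma addrLt_trichot (a b : Addr) : addrLt a b ∨ a = b ∨ addrLt b a := by
  classical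
  by_cases h : a = b
  · exact Or.inr (Or.inl h)
  have hex : ∃ k, a k ≠ b k := by
    by_contra hc; push_neg at hc; exact h (funext hc)
  have hk := Nat.find_spec hex
  have hmin : ∀ j, j < Nat.find hex → a j = b j := fun j hj => by
    have := Nat.find_min hex hj; simpa using this
  rcases lt_or_gt_of_ne hk with hlt | hgt
  · exact Or.inl ⟨Nat.find hex, hmin, hlt⟩
  · exact Or.inr (Or.inr ⟨Nat.find hex, fun j hj => (hmin j hj).symm, hgt⟩)

lemma head_le {a b : Addr} (h : addrLt a b) : a 0 < b 0 ∨ a 0 = b 0 := by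
  obtain ⟨k, hk, hl⟩ := h
  cases k with
  | zero => exact Or.inl hl
  | succ m => exact Or.inr (hk 0 (Nat.succ_pos m))

lemma tail_lt {a b : Addr} (h : addrLt a b) (h0 : a 0 = b 0) :
    addrLt (shift a) (shift b) := by
  obtain ⟨k, hk, hl⟩ := h
  cases k with
  | zero => exact absurd h0 (ne_of_lt hl)
  | succ m => exact ⟨m, fun j hj => hk (j + 1) (by omega), hl⟩

lemma head_tail_lt {a b : Addr} (h0 : a 0 = b 0) (h : addrLt (shift a) (shift b)) :
    addrLt a b := by
  obtain ⟨k, hk, hl⟩ := h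
  refine ⟨k + 1, fun j hj => ?_, hl⟩
  cases j with
  | zero => exact h0
  | succ m => exact hk m (by omega)

lemma shift_cons (x : Entry) (a : Addr) : shift (consAddr x a) = a := by
  funext k; simp [shift, consAddr]

lemma cons_head (x : Entry) (a : Addr) : consAddr x a 0 = x := rfl

lemma cons_head_shift (a : Addr) : consAddr (a 0) (shift a) = a := by
  funext k
  cases k with
  | zero => rfl
  | succ m => simp [consAddr, shift]

lemma cons_lt_cons_same (x : Entry) {a b : Addr} (h : addrLt a b) :
    addrLt (consAddr x a) (consAddr x b) :=
  head_tail_lt rfl (by rw [shift_cons, shift_cons]; exact h)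

lemma cons_lt_cons_head {x y : Entry} (a b : Addr) (h : x < y) :
    addrLt (consAddr x a) (consAddr y b) :=
  ⟨0, fun j hj => absurd hj (Nat.not_lt_zero j), h⟩

lemma shift_shiftIter (a : Addr) (k : ℕ) : shift (shiftIter a k) = shiftIter a (k + 1) := by
  funext j
  show a (j + 1 + k) = a (j + (k + 1))
  congr 1; omega

lemma shiftIter_head (a : Addr) (k : ℕ) : shiftIter a k 0 = a k := by
  show a (0 + k) = a k
  congr 1; omega

lemma entry_lt {m k : ℤ} : ((m : ℝ) : Entry) < ((k : ℝ) : Entry) ↔ m < k := by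
  rw [WithTop.coe_lt_coe, Int.cast_lt]

lemma entry_inj {m k : ℤ} (h : ((m : ℝ) : Entry) = ((k : ℝ) : Entry)) : m = k := by
  exact_mod_cast h

lemma cons_int_le {j j' : ℤ} (s : Addr) (h : j ≤ j') :
    addrLt (consAddr ((j : ℝ) : Entry) s) (consAddr ((j' : ℝ) : Entry) s) ∨
      consAddr ((j : ℝ) : Entry) s = consAddr ((j' : ℝ) : Entry) s := by
  rcases lt_or_eq_of_le h with h | h
  · exact Or.inl (cons_lt_cons_head _ _ (entry_lt.mpr h))
  · subst h; exact Or.inr rfl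

lemma ext_shift_ne_top {r : Addr} (h : IsExtAddr r) (k : ℕ) :
    shiftIter r k ≠ topAddr := by
  obtain ⟨m, hm⟩ := h k
  intro hc
  have h0 : shiftIter r k 0 = (⊤ : Entry) := by rw [hc]; rfl
  rw [shiftIter_head, hm] at h0
  exact WithTop.coe_ne_top h0

lemma sector_unique {s x : Addr} {j j' : ℤ}
    (h1 : addrLt (consAddr ((j : ℝ) : Entry) s) x)
    (h2 : addrLt x (consAddr (((j + 1 : ℤ) : ℝ) : Entry) s))
    (h1' : addrLt (consAddr ((j' : ℝ) : Entry) s) x)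
    (h2' : addrLt x (consAddr (((j' + 1 : ℤ) : ℝ) : Entry) s)) : j = j' := by
  by_contra hne
  have key : ∀ a b : ℤ, a < b →
      addrLt (consAddr ((a : ℝ) : Entry) s) x →
      addrLt x (consAddr (((a + 1 : ℤ) : ℝ) : Entry) s) →
      addrLt (consAddr ((b : ℝ) : Entry) s) x → False := by
    intro a b hab ha1 ha2 hb1
    rcases cons_int_le (j := a + 1) (j' := b) s (by omega) with hl | he
    · exact addrLt_irrefl x (addrLt_trans (addrLt_trans ha2 hl) hb1)
    · exact addrLt_irrefl x (addrLt_trans (he ▸ ha2) hb1)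
  rcases lt_or_gt_of_ne hne with h | h
  · exact key j j' h h1 h2 h1'
  · exact key j' j h h1' h2' h1

lemma not_bdy_of_sector {s x : Addr} {j : ℤ}
    (h1 : addrLt (consAddr ((j : ℝ) : Entry) s) x)
    (h2 : addrLt x (consAddr (((j + 1 : ℤ) : ℝ) : Entry) s)) :
    ¬ ∃ m : ℤ, x = consAddr ((m : ℝ) : Entry) s := by
  rintro ⟨m, rfl⟩
  rcases le_or_gt m j with h | h
  · rcases cons_int_le (j := m) (j' := j) s h with hl | he
    · exact addrLt_irrefl _ (addrLt_trans hl h1)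
    · exact addrLt_irrefl _ (he ▸ h1)
  · rcases cons_int_le (j := j + 1) (j' := m) s (by omega) with hl | he
    · exact addrLt_irrefl _ (addrLt_trans h2 hl)
    · exact addrLt_irrefl _ (he ▸ h2)

lemma itin_eq_int {s r : Addr} {k : ℕ} {j : ℤ} (hne : shiftIter r k ≠ topAddr)
    (h1 : addrLt (consAddr ((j : ℝ) : Entry) s) (shiftIter r k))
    (h2 : addrLt (shiftIter r k) (consAddr (((j + 1 : ℤ) : ℝ) : Entry) s)) :
    itin s r k = ItinEntry.int j := by
  unfold itin
  rw [if_neg hne, dif_neg (not_bdy_of_sector h1 h2)]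
  have hex : ∃ m : ℤ, addrLt (consAddr ((m : ℝ) : Entry) s) (shiftIter r k) ∧
      addrLt (shiftIter r k) (consAddr (((m + 1 : ℤ) : ℝ) : Entry) s) := ⟨j, h1, h2⟩
  rw [dif_pos hex]
  exact congrArg _ (sector_unique hex.choose_spec.1 hex.choose_spec.2 h1 h2)

lemma itin_cases (s r : Addr) (k : ℕ) {m : ℤ}
    (hm : shiftIter r k 0 = ((m : ℝ) : Entry)) :
    (∃ j : ℤ, itin s r k = ItinEntry.bdy j ∧
      shiftIter r k = consAddr ((j : ℝ) : Entry) s) ∨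
    (∃ j : ℤ, itin s r k = ItinEntry.int j ∧
      addrLt (consAddr ((j : ℝ) : Entry) s) (shiftIter r k) ∧
      addrLt (shiftIter r k) (consAddr (((j + 1 : ℤ) : ℝ) : Entry) s)) := by
  have hne : shiftIter r k ≠ topAddr := by
    intro hc
    have h0 : shiftIter r k 0 = (⊤ : Entry) := by rw [hc]; rfl
    rw [hm] at h0
    exact WithTop.coe_ne_top h0
  unfold itin
  rw [if_neg hne]
  by_cases hb : ∃ j : ℤ, shiftIter r k = consAddr ((j : ℝ) : Entry) s
  · rw [dif_pos hb]; exact Or.inl ⟨hb.choose, rfl, hb.choose_spec⟩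
  · rw [dif_neg hb]
    have hx : ∃ j : ℤ, addrLt (consAddr ((j : ℝ) : Entry) s) (shiftIter r k) ∧
        addrLt (shiftIter r k) (consAddr (((j + 1 : ℤ) : ℝ) : Entry) s) := by
      rcases addrLt_trichot (shift (shiftIter r k)) s with hlt | heq | hgt
      · refine ⟨m - 1, ⟨0, fun j hj => absurd hj (Nat.not_lt_zero j), ?_⟩, ?_⟩
        · rw [cons_head, hm]; exact entry_lt.mpr (by omega)
        · refine head_tail_lt ?_ ?_
          · rw [hm, cons_head]; norm_num
          · rw [shift_cons]; exact hlt
      · exact absurd ⟨m, (cons_head_shift (shiftIter r k)).symm.trans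
          (by rw [hm, heq])⟩ hb
      · refine ⟨m, head_tail_lt ?_ ?_, ⟨0, fun j hj => absurd hj (Nat.not_lt_zero j), ?_⟩⟩
        · rw [cons_head, hm]
        · rw [shift_cons]; exact hgt
        · rw [cons_head, hm]; exact entry_lt.mpr (by omega)
    rw [dif_pos hx]
    exact Or.inr ⟨hx.choose, rfl, hx.choose_spec⟩

lemma kminus_facts {s0 r : Addr} {k : ℕ} {u' : ℤ}
    (h : itinMinus s0 r k = ItinEntry.int u') :
    shiftIter r k = consAddr (((u' + 1 : ℤ) : ℝ) : Entry) s0 ∨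
      (addrLt (consAddr ((u' : ℝ) : Entry) s0) (shiftIter r k) ∧
        addrLt (shiftIter r k) (consAddr (((u' + 1 : ℤ) : ℝ) : Entry) s0)) := by
  unfold itinMinus itin at h
  split_ifs at h with h1 h2 h3
  · simp [entryMinus] at h
  · simp only [entryMinus, ItinEntry.int.injEq] at h
    have hc : h2.choose = u' + 1 := by omega
    left; rw [← hc]; exact h2.choose_spec
  · simp only [entryMinus, ItinEntry.int.injEq] at h
    right; rw [← h]; exact h3.choose_spec
  · simp [entryMinus] at h

lemma sector_transfer {rm rp s r : Addr} (h1 : addrLt rm s) (h2 : addrLt s rp)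
    (hav : ∀ k, 1 ≤ k → ¬(addrLt rm (shiftIter r k) ∧ addrLt (shiftIter r k) rp))
    (hext : IsExtAddr r) (k : ℕ) {u' : ℤ}
    (hfact : shiftIter r k = consAddr (((u' + 1 : ℤ) : ℝ) : Entry) rm ∨
      (addrLt (consAddr ((u' : ℝ) : Entry) rm) (shiftIter r k) ∧
        addrLt (shiftIter r k) (consAddr (((u' + 1 : ℤ) : ℝ) : Entry) rm))) :
    addrLt (consAddr ((u' : ℝ) : Entry) s) (shiftIter r k) ∧
      addrLt (shiftIter r k) (consAddr (((u' + 1 : ℤ) : ℝ) : Entry) s) := by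
  obtain ⟨m, hm0'⟩ := hext k
  have hm0 : shiftIter r k 0 = ((m : ℝ) : Entry) := by rw [shiftIter_head]; exact hm0'
  rcases hfact with hfe | ⟨hlo, hhi⟩
  · constructor
    · refine ⟨0, fun j hj => absurd hj (Nat.not_lt_zero j), ?_⟩
      rw [hfe, cons_head, cons_head]
      exact entry_lt.mpr (by omega)
    · rw [hfe]; exact cons_lt_cons_same _ h1
  · refine ⟨?_, addrLt_trans hhi (cons_lt_cons_same _ h1)⟩
    have hle : u' ≤ m := by
      rcases head_le hlo with hlt | heq
      · rw [cons_head, hm0] at hlt; exact le_of_lt (entry_lt.mp hlt)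
      · rw [cons_head, hm0] at heq; exact le_of_eq (entry_inj heq)
    rcases lt_or_eq_of_le hle with hlt | heqm
    · exact ⟨0, fun j hj => absurd hj (Nat.not_lt_zero j),
        by rw [cons_head, hm0]; exact entry_lt.mpr hlt⟩
    · have hhead : consAddr ((u' : ℝ) : Entry) rm 0 = shiftIter r k 0 := by
        rw [cons_head, hm0, heqm]
      have htail : addrLt rm (shiftIter r (k + 1)) := by
        have := tail_lt hlo hhead
        rwa [shift_cons, shift_shiftIter] at this
      have hnot : ¬ addrLt (shiftIter r (k + 1)) rp := fun hc =>
        hav (k + 1) (by omega) ⟨htail, hc⟩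
      have hsl : addrLt s (shiftIter r (k + 1)) := by
        rcases addrLt_trichot s (shiftIter r (k + 1)) with h | h | h
        · exact h
        · exact absurd (h ▸ h2) hnot
        · exact absurd (addrLt_trans h h2) hnot
      refine head_tail_lt ?_ ?_
      · rw [cons_head, hm0, heqm]
      · rw [shift_cons, shift_shiftIter]; exact hsl

end Aux

/-- For a combinatorial characteristic ray pair `⟨r⁻, r⁺⟩` of period `n`
with itinerary `(u_1 … u_n)^∞`, and any `s ∈ Ṡ`, the conditions
(i) `r⁻ < s < r⁺`, (ii) `itin_s(r⁻) = itin_s(r⁺) = (u_1 … u_n)^∞`, and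
(iii) `itin_s(r⁻) = itin_s(r⁺)` are equivalent. -/
theorem stmt1 (n : ℕ) (u : ℕ → ℤ) (rm rp : Addr)
    (hchar : CharRayPair rm rp n u) (s : Addr) (hs : InSDot s) :
    ((addrLt rm s ∧ addrLt s rp) ↔
        (itin s rm = perItin u n ∧ itin s rp = perItin u n)) ∧
    ((addrLt rm s ∧ addrLt s rp) ↔ itin s rm = itin s rp) := by
  obtain ⟨hem, hep, hpm, hpp, hlt, havm, havp, hkm, hkp, hflip⟩ := hchar
  have n1 : 1 ≤ n := hpm.1
  -- (i) → (ii)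
  have fwd : (addrLt rm s ∧ addrLt s rp) →
      itin s rm = perItin u n ∧ itin s rp = perItin u n := by
    rintro ⟨h1, h2⟩
    have main : ∀ r : Addr, IsExtAddr r →
        (∀ k, 1 ≤ k → ¬(addrLt rm (shiftIter r k) ∧ addrLt (shiftIter r k) rp)) →
        itinMinus rm r = perItin u n → itin s r = perItin u n := by
      intro r hext hav hk
      funext k
      have hfk : itinMinus rm r k = ItinEntry.int (u (k % n)) := congrFun hk k
      have hfact := kminus_facts hfk
      obtain ⟨hlo, hhi⟩ := sector_transfer h1 h2 hav hext k hfact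
      exact itin_eq_int (ext_shift_ne_top hext k) hlo hhi
    exact ⟨main rm hem havm hkm, main rp hep havp hkp⟩
  -- (iii) → (i)
  have bwd : itin s rm = itin s rp → (addrLt rm s ∧ addrLt s rp) := by
    intro h
    have hEq : itin s rm (n - 1) = itin s rp (n - 1) := congrFun h (n - 1)
    have hn : n - 1 + 1 = n := by omega
    have hA : shift (shiftIter rm (n - 1)) = rm := by
      rw [shift_shiftIter, hn]; exact hpm.2.1
    have hB : shift (shiftIter rp (n - 1)) = rp := by
      rw [shift_shiftIter, hn]; exact hpp.2.1
    obtain ⟨mA, hmA'⟩ := hem (n - 1)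
    obtain ⟨mB, hmB'⟩ := hep (n - 1)
    have hmA : shiftIter rm (n - 1) 0 = ((mA : ℝ) : Entry) := by
      rw [shiftIter_head]; exact hmA'
    have hmB : shiftIter rp (n - 1) 0 = ((mB : ℝ) : Entry) := by
      rw [shiftIter_head]; exact hmB'
    rcases itin_cases s rm (n - 1) hmA with ⟨jA, hvA, hxA⟩ | ⟨jA, hvA, h1A, h2A⟩ <;>
      rcases itin_cases s rp (n - 1) hmB with ⟨jB, hvB, hxB⟩ | ⟨jB, hvB, h1B, h2B⟩ <;>
        rw [hvA, hvB] at hEq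
    · -- both bdy
      have hjj : jA = jB := by injection hEq
      rw [hxA, hxB, hjj] at hflip
      exact absurd hflip (addrLt_irrefl _)
    · exact absurd hEq (by simp)
    · exact absurd hEq (by simp)
    · -- both int
      have hjj : jA = jB := by injection hEq
      subst hjj
      -- heads differ
      have hne_head : shiftIter rp (n - 1) 0 ≠ shiftIter rm (n - 1) 0 := by
        intro he
        have := tail_lt hflip he
        rw [hA, hB] at this
        exact addrLt_irrefl rm (addrLt_trans hlt this)
      have hBA : mB < mA := by
        rcases head_le hflip with h' | h'
        · rw [hmA, hmB] at h'; exact entry_lt.mp h'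
        · exact absurd h' hne_head
      have hvB' : jA ≤ mB := by
        rcases head_le h1B with h' | h'
        · rw [cons_head, hmB] at h'; exact le_of_lt (entry_lt.mp h')
        · rw [cons_head, hmB] at h'; exact le_of_eq (entry_inj h')
      have hvA' : mA ≤ jA + 1 := by
        rcases head_le h2A with h' | h'
        · rw [cons_head, hmA] at h'; exact le_of_lt (entry_lt.mp h')
        · rw [cons_head, hmA] at h'; exact le_of_eq (entry_inj h')
      have hmBv : mB = jA := by omega
      have hmAv : mA = jA + 1 := by omega
      constructor
      · -- rm < s, from A < (jA+1) s with equal heads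
        have hh : shiftIter rm (n - 1) 0 =
            consAddr (((jA + 1 : ℤ) : ℝ) : Entry) s 0 := by
          rw [cons_head, hmA, hmAv]
        have := tail_lt h2A hh
        rwa [hA, shift_cons] at this
      · -- s < rp, from (jA) s < B with equal heads
        have hh : consAddr ((jA : ℝ) : Entry) s 0 = shiftIter rp (n - 1) 0 := by
          rw [cons_head, hmB, hmBv]
        have := tail_lt h1B hh
        rwa [hB, shift_cons] at this
  have fwd3 : (addrLt rm s ∧ addrLt s rp) → itin s rm = itin s rp := fun h =>
    ((fwd h).1).trans ((fwd h).2).symm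
  exact ⟨⟨fwd, fun h => bwd (h.1.trans h.2.symm)⟩, ⟨fwd3, bwd⟩⟩

end
end

section
/- Let s ∈ Ṡ, and let u be either an infinite sequence of integers or a finite sequence of integers followed by the symbol *. Suppose that for every k ≥ 1 the shifted sequence σ^k(u) (obtained by deleting the first k symbols of u) differs from both K⁺(s) and K⁻(s). Then there exists an address r ∈ S̄ with itin_s(r) = u. -/
noncomputable section

namespace Stmt3Aux

/-! ### Basic order lemmas -/

lemma addrLt_irrefl (a : Addr) : ¬ addrLt a a := by
  rintro ⟨k, _, hk⟩; exact lt_irrefl _ hk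

lemma addrLt_of_ne {a b : Addr} (h : a ≠ b) : addrLt a b ∨ addrLt b a := by
  classical
  have hex : ∃ k, a k ≠ b k := by
    by_contra hc
    push_neg at hc
    exact h (funext hc)
  let k := Nat.find hex
  have hk : a k ≠ b k := Nat.find_spec hex
  have hpre : ∀ j, j < k → a j = b j := by
    intro j hj
    by_contra hne
    exact absurd (Nat.find_min hex hj) (by simp [hne])
  rcases lt_or_gt_of_ne hk with h1 | h1
  · exact Or.inl ⟨k, hpre, h1⟩
  · exact Or.inr ⟨k, fun j hj => (hpre j hj).symm, h1⟩

lemma addrLt_trans {a b c : Addr} (h1 : addrLt a b) (h2 : addrLt b c) : addrLt a c := by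
  obtain ⟨k1, hp1, hk1⟩ := h1
  obtain ⟨k2, hp2, hk2⟩ := h2
  rcases lt_trichotomy k1 k2 with h | h | h
  · exact ⟨k1, fun j hj => (hp1 j hj).trans (hp2 j (hj.trans h)), (hp2 k1 h) ▸ hk1⟩
  · subst h; exact ⟨k1, fun j hj => (hp1 j hj).trans (hp2 j hj), hk1.trans hk2⟩
  · exact ⟨k2, fun j hj => (hp1 j (hj.trans h)).trans (hp2 j hj), (hp1 k2 h).symm ▸ hk2⟩

lemma addrLt_asymm {a b : Addr} (h1 : addrLt a b) (h2 : addrLt b a) : False := by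
  exact addrLt_irrefl a (addrLt_trans h1 h2)

lemma addrLe_refl (a : Addr) : addrLe a a := Or.inr rfl


lemma addrLt_of_le_of_lt {a b c : Addr} (h1 : addrLe a b) (h2 : addrLt b c) : addrLt a c := by
  rcases h1 with h1 | rfl
  · exact addrLt_trans h1 h2
  · exact h2

lemma addrLt_of_lt_of_le {a b c : Addr} (h1 : addrLt a b) (h2 : addrLe b c) : addrLt a c := by
  rcases h2 with h2 | rfl
  · exact addrLt_trans h1 h2
  · exact h1

lemma not_le_iff_lt {a b : Addr} : ¬ addrLe a b ↔ addrLt b a := by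
  constructor
  · intro h
    have hne : b ≠ a := by rintro rfl; exact h (addrLe_refl b)
    rcases addrLt_of_ne hne with h1 | h1
    · exact h1
    · exact absurd (Or.inl h1) h
  · intro h hc
    exact addrLt_irrefl a (addrLt_of_le_of_lt hc h)

/-! ### shiftIter and consAddr lemmas -/

lemma shiftIter_zero (a : Addr) : shiftIter a 0 = a := rfl

lemma shiftIter_shiftIter (a : Addr) (k m : ℕ) :
    shiftIter (shiftIter a k) m = shiftIter a (m + k) := by
  funext j
  show a (j + m + k) = a (j + (m + k))
  ring_nf

lemma shiftIter_top (k : ℕ) : shiftIter topAddr k = topAddr := rfl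

lemma consAddr_zero (x : Entry) (a : Addr) : consAddr x a 0 = x := rfl

lemma consAddr_succ (x : Entry) (a : Addr) (k : ℕ) : consAddr x a (k + 1) = a k := rfl

lemma shiftIter_consAddr (x : Entry) (a : Addr) : shiftIter (consAddr x a) 1 = a := by
  funext j; show consAddr x a (j + 1) = a j; rfl

lemma decompose (a : Addr) (k : ℕ) :
    shiftIter a k = consAddr (a k) (shiftIter a (k + 1)) := by
  funext j
  cases j with
  | zero => show a (0 + k) = a k; rw [Nat.zero_add]
  | succ m =>
    show a (m + 1 + k) = a (m + (k+1))
    ring_nf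

lemma consAddr_lt_of_head {x y : Entry} (hxy : x < y) (a b : Addr) :
    addrLt (consAddr x a) (consAddr y b) :=
  ⟨0, by intro j hj; omega, hxy⟩

lemma consAddr_lt_of_tail {a b : Addr} (x : Entry) (h : addrLt a b) :
    addrLt (consAddr x a) (consAddr x b) := by
  obtain ⟨k, hp, hk⟩ := h
  refine ⟨k + 1, ?_, hk⟩
  intro j hj
  cases j with
  | zero => rfl
  | succ m => exact hp m (by omega)

lemma consAddr_le_of_tail {a b : Addr} (x : Entry) (h : addrLe a b) :
    addrLe (consAddr x a) (consAddr x b) := by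
  rcases h with h | rfl
  · exact Or.inl (consAddr_lt_of_tail x h)
  · exact Or.inr rfl

/-- If two consAddr's with the same tail compare, the heads compare. -/
lemma head_lt_of_consAddr_lt {x y : Entry} {t : Addr}
    (h : addrLt (consAddr x t) (consAddr y t)) : x < y := by
  obtain ⟨k, hp, hk⟩ := h
  cases k with
  | zero => exact hk
  | succ m =>
    exfalso
    exact lt_irrefl _ (show t m < t m from hk)

lemma head_le_of_consAddr_le {x y : Entry} {t : Addr}
    (h : addrLe (consAddr x t) (consAddr y t)) : x ≤ y := by
  rcases h with h | h
  · exact le_of_lt (head_lt_of_consAddr_lt h)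
  · exact le_of_eq (by have := congrFun h 0; exact this)

lemma consAddr_head_inj {x y : Entry} {t t' : Addr} (h : consAddr x t = consAddr y t') :
    x = y := congrFun h 0

lemma consAddr_ne_top {x : Entry} (hx : x ≠ ⊤) (a : Addr) : consAddr x a ≠ topAddr := by
  intro h
  exact hx (congrFun h 0)

lemma not_topAddr_lt (a : Addr) : ¬ addrLt topAddr a := by
  rintro ⟨k, _, hk⟩
  exact not_top_lt hk

lemma shiftIter_eq_s_of_eq_consAddr {r : Addr} {k : ℕ} {c : Entry} {s : Addr}
    (h : shiftIter r k = consAddr c s) : shiftIter r (k + 1) = s := by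
  have h1 : shiftIter (shiftIter r k) 1 = shiftIter r (1 + k) := shiftIter_shiftIter r k 1
  rw [h, shiftIter_consAddr] at h1
  rw [show k + 1 = 1 + k by ring]
  exact h1.symm

/-- Entry coercion facts -/
lemma intEntry_lt {m n : ℤ} (h : m < n) :
    ((m : ℝ) : Entry) < ((n : ℝ) : Entry) := by
  exact_mod_cast h

lemma intEntry_le_of_le {m n : ℤ} (h : ((m : ℝ) : Entry) ≤ ((n : ℝ) : Entry)) : m ≤ n := by
  exact_mod_cast h

lemma intEntry_inj {m n : ℤ} (h : ((m : ℝ) : Entry) = ((n : ℝ) : Entry)) : m = n := by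
  exact_mod_cast h

lemma intEntry_ne_top (m : ℤ) : ((m : ℝ) : Entry) ≠ ⊤ := WithTop.coe_ne_top

end Stmt3Aux
namespace Stmt3Aux

/-! ### itin computation lemmas -/

lemma itin_star {s r : Addr} {k : ℕ} (h : shiftIter r k = topAddr) :
    itin s r k = ItinEntry.star := by
  classical
  simp only [itin, if_pos h]

lemma itin_bdy {s r : Addr} {k : ℕ} (j : ℤ)
    (h : shiftIter r k = consAddr ((j : ℝ) : Entry) s) :
    itin s r k = ItinEntry.bdy j := by
  classical
  have hne : shiftIter r k ≠ topAddr := by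
    rw [h]; exact consAddr_ne_top (intEntry_ne_top j) s
  have hex : ∃ j' : ℤ, shiftIter r k = consAddr ((j' : ℝ) : Entry) s := ⟨j, h⟩
  simp only [itin, if_neg hne, dif_pos hex]
  congr 1
  have hsp := hex.choose_spec
  have : consAddr ((j : ℝ) : Entry) s = consAddr ((hex.choose : ℝ) : Entry) s := by
    rw [← h, ← hsp]
  exact intEntry_inj (consAddr_head_inj this).symm

lemma int_sector_unique {s : Addr} {t : Addr} {j j' : ℤ}
    (h1 : addrLt (consAddr ((j : ℝ) : Entry) s) t)
    (h2 : addrLt t (consAddr (((j + 1 : ℤ) : ℝ) : Entry) s))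
    (h1' : addrLt (consAddr ((j' : ℝ) : Entry) s) t)
    (h2' : addrLt t (consAddr (((j' + 1 : ℤ) : ℝ) : Entry) s)) : j' = j := by
  by_contra hne
  rcases lt_or_gt_of_ne hne with hlt | hlt
  · -- j' < j, so j' + 1 ≤ j
    have : addrLe (consAddr (((j' + 1 : ℤ) : ℝ) : Entry) s) (consAddr ((j : ℝ) : Entry) s) := by
      rcases eq_or_lt_of_le (show j' + 1 ≤ j by omega) with he | hl
      · exact Or.inr (by rw [he])
      · exact Or.inl (consAddr_lt_of_head (intEntry_lt hl) _ _)
    exact addrLt_asymm h2' (addrLt_of_le_of_lt this h1)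
  · have : addrLe (consAddr (((j + 1 : ℤ) : ℝ) : Entry) s) (consAddr ((j' : ℝ) : Entry) s) := by
      rcases eq_or_lt_of_le (show j + 1 ≤ j' by omega) with he | hl
      · exact Or.inr (by rw [he])
      · exact Or.inl (consAddr_lt_of_head (intEntry_lt hl) _ _)
    exact addrLt_asymm h2 (addrLt_of_le_of_lt this h1')

lemma itin_int {s r : Addr} {k : ℕ} (j : ℤ)
    (h1 : addrLt (consAddr ((j : ℝ) : Entry) s) (shiftIter r k))
    (h2 : addrLt (shiftIter r k) (consAddr (((j + 1 : ℤ) : ℝ) : Entry) s)) :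
    itin s r k = ItinEntry.int j := by
  classical
  have hne : shiftIter r k ≠ topAddr := by
    intro h
    rw [h] at h2
    exact not_topAddr_lt _ h2
  have hnb : ¬ ∃ j' : ℤ, shiftIter r k = consAddr ((j' : ℝ) : Entry) s := by
    rintro ⟨j', hj'⟩
    rw [hj'] at h1 h2
    have hj1 : j < j' := by
      have := head_lt_of_consAddr_lt h1
      exact_mod_cast this
    have hj2 : j' < j + 1 := by
      have := head_lt_of_consAddr_lt h2
      exact_mod_cast this
    omega
  have hex : ∃ j' : ℤ, addrLt (consAddr ((j' : ℝ) : Entry) s) (shiftIter r k) ∧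
      addrLt (shiftIter r k) (consAddr (((j' + 1 : ℤ) : ℝ) : Entry) s) := ⟨j, h1, h2⟩
  simp only [itin, if_neg hne, dif_neg hnb, dif_pos hex]
  congr 1
  obtain ⟨g1, g2⟩ := hex.choose_spec
  exact int_sector_unique h1 h2 g1 g2

/-- A tail whose head is a half-integer and whose further entries are `⊤` gives
an `int` itinerary entry. -/
lemma itin_halfint {s r : Addr} {k : ℕ} (m : ℤ)
    (h : shiftIter r k = consAddr ((((m : ℝ) + 1 / 2 : ℝ)) : Entry) topAddr) :
    itin s r k = ItinEntry.int m := by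
  classical
  have hlow : addrLt (consAddr ((m : ℝ) : Entry) s) (shiftIter r k) := by
    rw [h]
    refine consAddr_lt_of_head ?_ _ _
    exact_mod_cast (by linarith : (m : ℝ) < (m : ℝ) + 1/2)
  have hhigh : addrLt (shiftIter r k) (consAddr (((m + 1 : ℤ) : ℝ) : Entry) s) := by
    rw [h]
    refine consAddr_lt_of_head ?_ _ _
    have : ((m : ℝ) + 1/2) < ((m + 1 : ℤ) : ℝ) := by push_cast; linarith
    exact_mod_cast this
  exact itin_int m hlow hhigh

end Stmt3Aux
namespace Stmt3Aux

lemma itin_congr {s a b : Addr} {m m' : ℕ} (h : shiftIter a m = shiftIter b m') :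
    itin s a m = itin s b m' := by
  classical
  simp only [itin, h]

/-! ### The finite case: backward construction of an intermediate address -/

open scoped Classical in
/-- Backward build for the finite case.  `finBuild s U n i` is `σ^{n-1-i}` of the
final address; `i` counts the number of levels already built. -/
def finBuild (s : Addr) (U : ℕ → ℤ) (n : ℕ) : ℕ → Addr
  | 0 => topAddr
  | 1 => consAddr ((((U (n - 2) : ℝ) + 1 / 2 : ℝ)) : Entry) topAddr
  | (i + 2) =>
      consAddr
        (((U (n - 3 - i) + (if addrLt s (finBuild s U n (i + 1)) then 0 else 1) : ℤ) : ℝ) : Entry)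
        (finBuild s U n (i + 1))

lemma finBuild_shift (s : Addr) (U : ℕ → ℤ) (n : ℕ) (m : ℕ) (hm : 1 ≤ m) :
    shiftIter (finBuild s U n m) 1 = finBuild s U n (m - 1) := by
  match m, hm with
  | 1, _ => rw [show (1:ℕ) - 1 = 0 from rfl]; exact shiftIter_consAddr _ _
  | (i+2), _ => exact shiftIter_consAddr _ _

lemma finBuild_shift_d (s : Addr) (U : ℕ → ℤ) (n : ℕ) :
    ∀ d m, d ≤ m → shiftIter (finBuild s U n m) d = finBuild s U n (m - d) := by
  intro d
  induction d with
  | zero => intro m _; exact shiftIter_zero _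
  | succ e ih =>
    intro m hm
    have h1 : shiftIter (finBuild s U n m) (e + 1)
        = shiftIter (shiftIter (finBuild s U n m) e) 1 := by
      rw [shiftIter_shiftIter, Nat.add_comm 1 e]
    rw [h1, ih m (by omega), finBuild_shift s U n (m - e) (by omega)]
    have h2 : m - e - 1 = m - (e + 1) := by omega
    rw [h2]

theorem finite_case (s : Addr) (u : ℕ → ItinEntry) (n : ℕ) (hn : 2 ≤ n) (U : ℕ → ℤ)
    (hu : ∀ k, k + 1 < n → u k = ItinEntry.int (U k))
    (hstars : ∀ k, n ≤ k + 1 → u k = ItinEntry.star)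
    (hK : ∀ k, 1 ≤ k →
      (fun j => u (j + k)) ≠ itinPlus s s ∧ (fun j => u (j + k)) ≠ itinMinus s s) :
    ∃ r : Addr, InSBar r ∧ itin s r = u := by
  classical
  set r : Addr := finBuild s U n (n - 1) with hr
  have hshift : ∀ k, k ≤ n - 1 → shiftIter r k = finBuild s U n (n - 1 - k) := by
    intro k hk
    exact finBuild_shift_d s U n k (n-1) hk
  have hstar_tail : ∀ k, n ≤ k + 1 → shiftIter r k = topAddr := by
    intro k hk
    have h1 : shiftIter r (n - 1) = finBuild s U n 0 := by
      have := hshift (n-1) le_rfl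
      rwa [Nat.sub_self] at this
    have h2 : shiftIter r k = shiftIter (shiftIter r (n-1)) (k - (n-1)) := by
      rw [shiftIter_shiftIter]
      have h3 : k - (n-1) + (n-1) = k := by omega
      rw [h3]
    rw [h2, h1]
    exact shiftIter_top _
  -- the crucial downward induction
  have main : ∀ i, ∀ k, k + 1 < n → n - 2 - k = i → itin s r k = ItinEntry.int (U k) := by
    intro i
    induction i using Nat.strong_induction_on with
    | _ i ih =>
      intro k hk hik
      by_cases hk2 : k = n - 2
      · -- bottom level: half-integer entry
        have e1 : n - 1 - k = 1 := by omega
        have hsh : shiftIter r k = finBuild s U n 1 := by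
          rw [hshift k (by omega), e1]
        rw [hk2] at hsh ⊢
        exact itin_halfint (U (n-2)) hsh
      · -- interior level
        have hklt : k + 2 < n := by omega
        have hi : n - 1 - k = (n - 3 - k) + 2 := by omega
        have hsh : shiftIter r k = finBuild s U n ((n - 3 - k) + 2) := by
          rw [hshift k (by omega), hi]
        have e2 : n - 1 - (k+1) = n - 3 - k + 1 := by omega
        have htail : shiftIter r (k+1) = finBuild s U n (n - 3 - k + 1) := by
          rw [hshift (k+1) (by omega), e2]
        set t : Addr := finBuild s U n (n - 3 - k + 1) with ht
        have hUk : n - 3 - (n - 3 - k) = k := by omega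
        have hsh' : shiftIter r k
            = consAddr (((U k + (if addrLt s t then 0 else 1) : ℤ) : ℝ) : Entry) t := by
          rw [hsh]
          show consAddr _ _ = _
          rw [hUk]
        by_cases hc : addrLt s t
        · rw [if_pos hc] at hsh'
          have h1 : addrLt (consAddr ((U k : ℝ) : Entry) s) (shiftIter r k) := by
            rw [hsh', show (U k + 0 : ℤ) = U k by ring]
            exact consAddr_lt_of_tail _ hc
          have h2 : addrLt (shiftIter r k) (consAddr (((U k + 1 : ℤ) : ℝ) : Entry) s) := by
            rw [hsh']
            exact consAddr_lt_of_head (intEntry_lt (by omega)) _ _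
          exact itin_int (U k) h1 h2
        · rw [if_neg hc] at hsh'
          by_cases he : t = s
          · -- tie: contradiction with hK
            exfalso
            have htie : shiftIter r (k+1) = s := htail.trans he
            have heq : (fun j => u (j + (k+1))) = itinPlus s s := by
              funext j
              have hcongr : itin s s j = itin s r (j + (k+1)) := by
                apply itin_congr
                rw [← htie, shiftIter_shiftIter]
              show u (j + (k+1)) = entryPlus (itin s s j)
              by_cases hj : (j + (k+1)) + 1 < n
              · have hih := ih (n - 2 - (j + (k+1))) (by omega) (j + (k+1)) hj rfl
                rw [hcongr, hih, hu (j + (k+1)) hj]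
                rfl
              · have hstar : itin s r (j + (k+1)) = ItinEntry.star :=
                  itin_star (hstar_tail _ (by omega))
                rw [hcongr, hstar, hstars (j + (k+1)) (by omega)]
                rfl
            exact (hK (k+1) (by omega)).1 heq
          · have hlt : addrLt t s := by
              rcases addrLt_of_ne he with h | h
              · exact h
              · exact absurd h hc
            have h1 : addrLt (consAddr ((U k : ℝ) : Entry) s) (shiftIter r k) := by
              rw [hsh']
              exact consAddr_lt_of_head (intEntry_lt (by omega)) _ _
            have h2 : addrLt (shiftIter r k) (consAddr (((U k + 1 : ℤ) : ℝ) : Entry) s) := by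
              rw [hsh']
              exact consAddr_lt_of_tail _ hlt
            exact itin_int (U k) h1 h2
  refine ⟨r, ?_, ?_⟩
  · -- r is an intermediate address of length n
    refine Or.inl (Or.inr ⟨n, hn, hn.trans' (by omega), ?_, ?_, ?_⟩)
    · intro k hk
      have h0 : r k = shiftIter r k 0 := by
        show r k = r (0 + k)
        rw [Nat.zero_add]
      have e1 : n - 1 - k = (n - 3 - k) + 2 := by omega
      have hsh : shiftIter r k = finBuild s U n ((n - 3 - k) + 2) := by
        rw [hshift k (by omega), e1]
      rw [h0, hsh]
      exact ⟨U (n - 3 - (n - 3 - k)) + (if addrLt s (finBuild s U n (n - 3 - k + 1)) then 0 else 1),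
        rfl⟩
    · intro k hk
      have h0 : r k = shiftIter r k 0 := by
        show r k = r (0 + k)
        rw [Nat.zero_add]
      have e1 : n - 1 - k = 1 := by omega
      have hsh : shiftIter r k = finBuild s U n 1 := by
        rw [hshift k (by omega), e1]
      rw [h0, hsh]
      exact ⟨U (n - 2), rfl⟩
    · intro k hk
      have h0 : r k = shiftIter r k 0 := by
        show r k = r (0 + k)
        rw [Nat.zero_add]
      rw [h0, hstar_tail k hk]
      rfl
  · funext k
    by_cases hk : k + 1 < n
    · rw [main (n - 2 - k) k hk rfl, hu k hk]
    · rw [itin_star (hstar_tail k (by omega)), hstars k (by omega)]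

end Stmt3Aux
namespace Stmt3Aux

/-! ### The infinite case: approximants, tree branch -/

/-- Address with integer entries. -/
def iAddr (f : ℕ → ℤ) : Addr := fun k => ((f k : ℝ) : Entry)

lemma iAddr_ext (f : ℕ → ℤ) : IsExtAddr (iAddr f) := fun k => ⟨f k, rfl⟩

lemma shiftIter_iAddr_apply (f : ℕ → ℤ) (k j : ℕ) :
    shiftIter (iAddr f) k j = ((f (j + k) : ℝ) : Entry) := rfl

/-- Membership in the `n`-th approximating set `V_n`. -/
def Vmem (s : Addr) (U : ℕ → ℤ) (n : ℕ) (f : ℕ → ℤ) : Prop :=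
  (∀ m, f m = U m ∨ f m = U m + 1) ∧
  ∀ k, k < n → addrLe (consAddr ((U k : ℝ) : Entry) s) (shiftIter (iAddr f) k) ∧
    addrLt (shiftIter (iAddr f) k) (consAddr (((U k + 1 : ℤ) : ℝ) : Entry) s)

lemma Vmem_mono {s : Addr} {U : ℕ → ℤ} {n n' : ℕ} (h : n ≤ n') {f : ℕ → ℤ}
    (hf : Vmem s U n' f) : Vmem s U n f :=
  ⟨hf.1, fun k hk => hf.2 k (lt_of_lt_of_le hk h)⟩

open scoped Classical in
/-- Backward weak build producing an element of `V_n`. `wBuild s U n i` has filled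
the levels `n - i, …, n - 1`. -/
def wBuild (s : Addr) (U : ℕ → ℤ) (n : ℕ) : ℕ → (ℕ → ℤ)
  | 0 => fun m => U m + 1
  | (i + 1) => fun m =>
      if m = n - (i + 1) then
        U m + (if addrLe s (shiftIter (iAddr (wBuild s U n i)) (m + 1)) then 0 else 1)
      else wBuild s U n i m

lemma wBuild_stable (s : Addr) (U : ℕ → ℤ) (n : ℕ) :
    ∀ i j, i ≤ j → j ≤ n → ∀ m, n - i ≤ m → wBuild s U n j m = wBuild s U n i m := by
  intro i j
  induction j with
  | zero => intro hij _ m _; have : i = 0 := by omega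
            rw [this]
  | succ j ih =>
    intro hij hjn m hm
    by_cases hji : i = j + 1
    · rw [hji]
    · have h1 : i ≤ j := by omega
      have h2 : wBuild s U n (j+1) m = wBuild s U n j m := by
        show (if m = n - (j+1) then _ else wBuild s U n j m) = wBuild s U n j m
        rw [if_neg (by omega)]
      rw [h2, ih h1 (by omega) m hm]

/-- Key sector lemma: if the tail is weakly ≥ `s` resp. < `s`, the two flag values give
addresses in the half-open sector. -/
lemma sector_of_flag0 {s t : Addr} {c : ℤ} (h : addrLe s t) :
    addrLe (consAddr ((c : ℝ) : Entry) s) (consAddr ((c : ℝ) : Entry) t) ∧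
      addrLt (consAddr ((c : ℝ) : Entry) t) (consAddr (((c + 1 : ℤ) : ℝ) : Entry) s) :=
  ⟨consAddr_le_of_tail _ h, consAddr_lt_of_head (intEntry_lt (by omega)) _ _⟩

lemma sector_of_flag1 {s t : Addr} {c : ℤ} (h : addrLt t s) :
    addrLe (consAddr ((c : ℝ) : Entry) s) (consAddr (((c + 1 : ℤ) : ℝ) : Entry) t) ∧
      addrLt (consAddr (((c + 1 : ℤ) : ℝ) : Entry) t) (consAddr (((c + 1 : ℤ) : ℝ) : Entry) s) :=
  ⟨Or.inl (consAddr_lt_of_head (intEntry_lt (by omega)) _ _), consAddr_lt_of_tail _ h⟩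

lemma wBuild_twoval (s : Addr) (U : ℕ → ℤ) (n : ℕ) :
    ∀ i m, wBuild s U n i m = U m ∨ wBuild s U n i m = U m + 1 := by
  classical
  intro i
  induction i with
  | zero => intro m; exact Or.inr rfl
  | succ i ih =>
    intro m
    simp only [wBuild]
    by_cases hm : m = n - (i+1)
    · rw [if_pos hm]
      by_cases hc : addrLe s (shiftIter (iAddr (wBuild s U n i)) (m + 1))
      · rw [if_pos hc]; exact Or.inl (by ring)
      · rw [if_neg hc]; exact Or.inr rfl
    · rw [if_neg hm]; exact ih m

lemma V_nonempty (s : Addr) (U : ℕ → ℤ) (n : ℕ) : ∃ f, Vmem s U n f := by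
  classical
  set f : ℕ → ℤ := wBuild s U n n with hf
  refine ⟨f, wBuild_twoval s U n n, ?_⟩
  intro k hk
  have hkn : n - (n - k - 1 + 1) = k := by omega
  -- tail equality
  have htail : shiftIter (iAddr f) (k+1) = shiftIter (iAddr (wBuild s U n (n - k - 1))) (k+1) := by
    funext j
    have h := wBuild_stable s U n (n - k - 1) n (by omega) le_rfl (j + (k+1)) (by omega)
    show ((f (j + (k+1)) : ℝ) : Entry) = ((wBuild s U n (n - k - 1) (j + (k+1)) : ℝ) : Entry)
    rw [hf, h]
  -- value of f at k
  have hfk : f k = U k +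
      (if addrLe s (shiftIter (iAddr (wBuild s U n (n - k - 1))) (k + 1)) then 0 else 1) := by
    have h1 : f k = wBuild s U n (n - k) k := by
      rw [hf, wBuild_stable s U n (n - k) n (by omega) le_rfl k (by omega)]
    have h2 : n - k = (n - k - 1) + 1 := by omega
    rw [h1, h2]
    simp only [wBuild]
    rw [if_pos hkn.symm]
    simp only [Nat.add_sub_cancel]
  have hdec : shiftIter (iAddr f) k = consAddr (((f k : ℝ)) : Entry) (shiftIter (iAddr f) (k+1)) := by
    have := decompose (iAddr f) k
    exact this
  by_cases hc : addrLe s (shiftIter (iAddr (wBuild s U n (n - k - 1))) (k + 1))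
  · have hfk0 : f k = U k := by rw [hfk, if_pos hc]; ring
    have hle : addrLe s (shiftIter (iAddr f) (k+1)) := by rw [htail]; exact hc
    have h := sector_of_flag0 (s := s) (t := shiftIter (iAddr f) (k+1)) (c := U k) hle
    rw [hdec, hfk0]
    exact h
  · have hfk1 : f k = U k + 1 := by rw [hfk, if_neg hc]
    have hlt : addrLt (shiftIter (iAddr f) (k+1)) s := by
      rw [htail]; exact not_le_iff_lt.1 hc
    have h := sector_of_flag1 (s := s) (t := shiftIter (iAddr f) (k+1)) (c := U k) hlt
    rw [hdec, hfk1]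
    have hcast : ((U k + 1 : ℤ) : ℝ) = ((U k : ℝ) + 1) := by push_cast; ring
    constructor
    · exact h.1
    · exact h.2

end Stmt3Aux
namespace Stmt3Aux

open scoped Classical in
/-- Greedy prefix construction: `branchPre s U (k+1)` fixes the branch values at
positions `0, …, k`. -/
def branchPre (s : Addr) (U : ℕ → ℤ) : ℕ → (ℕ → ℤ)
  | 0 => fun _ => 0
  | (k + 1) => fun m =>
      if m = k then
        (if (∀ n, ∃ f, Vmem s U n f ∧ (∀ j, j < k → f j = branchPre s U k j) ∧ f k = U k)
          then U k else U k + 1)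
      else branchPre s U k m

/-- The branch itself. -/
def branch (s : Addr) (U : ℕ → ℤ) : ℕ → ℤ := fun m => branchPre s U (m + 1) m

lemma branchPre_stable (s : Addr) (U : ℕ → ℤ) :
    ∀ k m, m < k → branchPre s U k m = branch s U m := by
  intro k
  induction k with
  | zero => intro m hm; omega
  | succ k ih =>
    intro m hm
    by_cases hmk : m = k
    · rw [hmk]; rfl
    · have h1 : branchPre s U (k+1) m = branchPre s U k m := by
        show (if m = k then _ else _) = _
        rw [if_neg hmk]
      rw [h1, ih m (by omega)]

lemma branch_inv (s : Addr) (U : ℕ → ℤ) :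
    ∀ k n, ∃ f, Vmem s U n f ∧ ∀ j, j < k → f j = branch s U j := by
  classical
  intro k
  induction k with
  | zero =>
    intro n
    obtain ⟨f, hf⟩ := V_nonempty s U n
    exact ⟨f, hf, fun j hj => by omega⟩
  | succ k ih =>
    intro n
    by_cases hC : (∀ n, ∃ f, Vmem s U n f ∧ (∀ j, j < k → f j = branchPre s U k j) ∧ f k = U k)
    · obtain ⟨f, hf, hpre, hfk⟩ := hC n
      refine ⟨f, hf, ?_⟩
      intro j hj
      by_cases hjk : j = k
      · rw [hjk, hfk]
        show _ = branchPre s U (k+1) k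
        have : branchPre s U (k+1) k = if (∀ n, ∃ f, Vmem s U n f ∧
            (∀ j, j < k → f j = branchPre s U k j) ∧ f k = U k) then U k else U k + 1 := by
          show (if k = k then _ else _) = _
          rw [if_pos rfl]
        rw [this, if_pos hC]
      · rw [hpre j (by omega), branchPre_stable s U k j (by omega)]
    · push_neg at hC
      obtain ⟨n₀, hn₀⟩ := hC
      obtain ⟨f, hf, hpre⟩ := ih (max n n₀)
      refine ⟨f, Vmem_mono (le_max_left n n₀) hf, ?_⟩
      intro j hj
      by_cases hjk : j = k
      · subst hjk
        have hfV : Vmem s U n₀ f := Vmem_mono (le_max_right n n₀) hf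
        have hne : f j ≠ U j := by
          intro hfj
          exact hn₀ f hfV (fun i hi => by
            rw [hpre i hi, branchPre_stable s U j i hi]) hfj
        have h2 : f j = U j + 1 := (hf.1 j).resolve_left hne
        have h3 : branch s U j = U j + 1 := by
          show branchPre s U (j+1) j = _
          have : branchPre s U (j+1) j = if (∀ n, ∃ f, Vmem s U n f ∧
              (∀ i, i < j → f i = branchPre s U j i) ∧ f j = U j) then U j else U j + 1 := by
            show (if j = j then _ else _) = _
            rw [if_pos rfl]
          rw [this, if_neg ?_]
          intro hCj
          obtain ⟨g, hg, hgpre, hgj⟩ := hCj n₀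
          exact hn₀ g hg hgpre hgj
        rw [h2, h3]
      · rw [hpre j (by omega)]

lemma branch_twoval (s : Addr) (U : ℕ → ℤ) (m : ℕ) :
    branch s U m = U m ∨ branch s U m = U m + 1 := by
  obtain ⟨f, hf, hpre⟩ := branch_inv s U (m+1) 0
  rw [← hpre m (by omega)]
  exact hf.1 m

end Stmt3Aux
namespace Stmt3Aux

lemma branch_agree {s : Addr} {U : ℕ → ℤ} {f : ℕ → ℤ} {M : ℕ}
    (hpre : ∀ j, j < M → f j = branch s U j) (k j : ℕ) (hj : j + k < M) :
    shiftIter (iAddr f) k j = shiftIter (iAddr (branch s U)) k j := by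
  show ((f (j + k) : ℝ) : Entry) = ((branch s U (j + k) : ℝ) : Entry)
  rw [hpre (j + k) hj]

lemma branch_lower (s : Addr) (U : ℕ → ℤ) (k : ℕ) :
    addrLe (consAddr ((U k : ℝ) : Entry) s) (shiftIter (iAddr (branch s U)) k) := by
  by_contra h
  obtain ⟨ρ, hpre, hlt⟩ := not_le_iff_lt.1 h
  obtain ⟨f, hf, hfpre⟩ := branch_inv s U (k + ρ + 1) (k + 1)
  have hent : ∀ j, j ≤ ρ → shiftIter (iAddr f) k j = shiftIter (iAddr (branch s U)) k j :=
    fun j hj => branch_agree hfpre k j (by omega)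
  have hlt' : addrLt (shiftIter (iAddr f) k) (consAddr ((U k : ℝ) : Entry) s) :=
    ⟨ρ, fun j hj => (hent j (le_of_lt hj)).trans (hpre j hj), (hent ρ le_rfl).symm ▸ hlt⟩
  have hle := (hf.2 k (by omega)).1
  exact addrLt_irrefl _ (addrLt_of_le_of_lt hle hlt')

lemma branch_upper (s : Addr) (U : ℕ → ℤ) (k : ℕ) :
    addrLe (shiftIter (iAddr (branch s U)) k) (consAddr (((U k + 1 : ℤ) : ℝ) : Entry) s) := by
  by_contra h
  obtain ⟨ρ, hpre, hlt⟩ := not_le_iff_lt.1 h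
  obtain ⟨f, hf, hfpre⟩ := branch_inv s U (k + ρ + 1) (k + 1)
  have hent : ∀ j, j ≤ ρ → shiftIter (iAddr f) k j = shiftIter (iAddr (branch s U)) k j :=
    fun j hj => branch_agree hfpre k j (by omega)
  have hlt' : addrLt (consAddr (((U k + 1 : ℤ) : ℝ) : Entry) s) (shiftIter (iAddr f) k) :=
    ⟨ρ, fun j hj => (hpre j hj).trans (hent j (le_of_lt hj)).symm, (hent ρ le_rfl).symm ▸ hlt⟩
  have hup := (hf.2 k (by omega)).2
  exact addrLt_asymm hup hlt'

end Stmt3Aux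
namespace Stmt3Aux

theorem infinite_case (s : Addr) (hs : InSDot s) (u : ℕ → ItinEntry) (U : ℕ → ℤ)
    (hu : ∀ k, u k = ItinEntry.int (U k))
    (hK : ∀ k, 1 ≤ k →
      (fun j => u (j + k)) ≠ itinPlus s s ∧ (fun j => u (j + k)) ≠ itinMinus s s) :
    ∃ r : Addr, InSBar r ∧ itin s r = u := by
  classical
  set xA : Addr := iAddr (branch s U) with hxA
  by_cases htouch : ∀ k, addrLt (consAddr ((U k : ℝ) : Entry) s) (shiftIter xA k) ∧
      addrLt (shiftIter xA k) (consAddr (((U k + 1 : ℤ) : ℝ) : Entry) s)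
  · refine ⟨xA, Or.inl (Or.inl (iAddr_ext _)), funext fun k => ?_⟩
    rw [itin_int (U k) (htouch k).1 (htouch k).2, hu k]
  · -- some touch: the tail of the branch is s itself
    push_neg at htouch
    obtain ⟨k, hk⟩ := htouch
    have htail : shiftIter xA (k + 1) = s := by
      rcases branch_lower s U k with hl | hl
      · rcases branch_upper s U k with hu' | hu'
        · exact absurd hu' (hk hl)
        · exact shiftIter_eq_s_of_eq_consAddr hu'
      · exact shiftIter_eq_s_of_eq_consAddr hl.symm
    have hshift_tail : ∀ i, shiftIter xA (i + (k + 1)) = shiftIter s i := by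
      intro i
      rw [← shiftIter_shiftIter, htail]
    have hTlow : ∀ i, addrLe (consAddr ((U (i + (k + 1)) : ℝ) : Entry) s) (shiftIter s i) := by
      intro i
      have := branch_lower s U (i + (k + 1))
      rwa [hshift_tail i] at this
    have hThigh : ∀ i, addrLe (shiftIter s i)
        (consAddr (((U (i + (k + 1)) + 1 : ℤ) : ℝ) : Entry) s) := by
      intro i
      have := branch_upper s U (i + (k + 1))
      rwa [hshift_tail i] at this
    by_cases hper : ∃ q, 1 ≤ q ∧ shiftIter s q = s
    · -- s is periodic
      set q := Nat.find hper with hqdef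
      obtain ⟨hq1, hqs⟩ := Nat.find_spec hper
      have hqmin : ∀ m, m < q → ¬ (1 ≤ m ∧ shiftIter s m = s) := fun m hm => Nat.find_min hper hm
      have per_mult : ∀ c, shiftIter s (c * q) = s := by
        intro c
        induction c with
        | zero => rw [Nat.zero_mul]; exact shiftIter_zero s
        | succ c ih =>
          have h1 : (c + 1) * q = c * q + q := by ring
          rw [h1, ← shiftIter_shiftIter, hqs, ih]
      have per_entry : ∀ d c, s (d + c * q) = s d := fun d c => congrFun (per_mult c) d
      have per_dvd : ∀ j, shiftIter s j = s → ∃ c, j = c * q := by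
        intro j hj
        have hmd : j % q + j / q * q = j := Nat.mod_add_div' j q
        have h1 : shiftIter s (j % q) = s := by
          have h2 : shiftIter s (j % q + j / q * q) = shiftIter (shiftIter s (j / q * q)) (j % q) :=
            (shiftIter_shiftIter s (j / q * q) (j % q)).symm
          rw [hmd, per_mult (j / q)] at h2
          rw [← h2, hj]
        by_cases h0 : j % q = 0
        · exact ⟨j / q, by omega⟩
        · exact absurd ⟨by omega, h1⟩ (hqmin (j % q) (Nat.mod_lt j (by omega)))
      -- s is an infinite external address
      have hSext : ∀ d, ∃ m : ℤ, s d = ((m : ℝ) : Entry) := by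
        rcases hs with hext | ⟨ℓ, hℓ2, hint⟩
        · exact hext
        · exfalso
          obtain ⟨m, hm⟩ := hint.2.2.1 (ℓ - 2) (by omega)
          have htop : s (ℓ - 2 + q) = ⊤ := hint.2.2.2 (ℓ - 2 + q) (by omega)
          have h1 : s (ℓ - 2 + 1 * q) = s (ℓ - 2) := per_entry (ℓ - 2) 1
          rw [show ℓ - 2 + 1 * q = ℓ - 2 + q by ring] at h1
          rw [htop, hm] at h1
          exact WithTop.coe_ne_top h1.symm
      set S : ℕ → ℤ := fun d => (hSext d).choose with hSdef
      have hS : ∀ d, s d = ((S d : ℝ) : Entry) := fun d => (hSext d).choose_spec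
      have per_S : ∀ d c, S (d + c * q) = S d := by
        intro d c
        have := per_entry d c
        rw [hS (d + c * q), hS d] at this
        exact intEntry_inj this
      have hbdy : ∀ j, (∃ c : ℕ, j + 1 = c * q) →
          shiftIter s j = consAddr ((S j : ℝ) : Entry) s := by
        rintro j ⟨c, hc⟩
        have h1 : shiftIter s (j + 1) = s := by rw [hc]; exact per_mult c
        rw [decompose s j, h1, hS j]
      have hbit : ∀ j, (∃ c : ℕ, j + 1 = c * q) →
          S j = U (j + (k + 1)) ∨ S j = U (j + (k + 1)) + 1 := by
        intro j hj
        have h1 := hTlow j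
        have h2 := hThigh j
        rw [hbdy j hj] at h1 h2
        have hle1 : U (j + (k + 1)) ≤ S j := intEntry_le_of_le (head_le_of_consAddr_le h1)
        have hle2 : S j ≤ U (j + (k + 1)) + 1 := intEntry_le_of_le (head_le_of_consAddr_le h2)
        omega
      -- strict itinerary entries at non-boundary positions
      have hstrict : ∀ j, (¬ ∃ c : ℕ, j + 1 = c * q) → itin s s j = ItinEntry.int (U (j + (k+1))) := by
        intro j hj
        have hne1 : consAddr ((U (j + (k+1)) : ℝ) : Entry) s ≠ shiftIter s j := by
          intro h
          exact hj (per_dvd (j+1) (shiftIter_eq_s_of_eq_consAddr h.symm))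
        have hne2 : shiftIter s j ≠ consAddr (((U (j + (k+1)) + 1 : ℤ) : ℝ) : Entry) s := by
          intro h
          exact hj (per_dvd (j+1) (shiftIter_eq_s_of_eq_consAddr h))
        have h1 : addrLt (consAddr ((U (j + (k+1)) : ℝ) : Entry) s) (shiftIter s j) :=
          (hTlow j).resolve_right (fun h => hne1 h)
        have h2 : addrLt (shiftIter s j) (consAddr (((U (j + (k+1)) + 1 : ℤ) : ℝ) : Entry) s) :=
          (hThigh j).resolve_right (fun h => hne2 h)
        exact itin_int _ h1 h2
      by_cases hallA : ∀ j, (∃ c : ℕ, j + 1 = c * q) → S j = U (j + (k + 1)) + 1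
      · -- all boundary bits are `+1`: K⁻(s) equals the shifted u
        exfalso
        refine (hK (k+1) (by omega)).2 ?_
        funext j
        show u (j + (k+1)) = entryMinus (itin s s j)
        by_cases hjq : ∃ c : ℕ, j + 1 = c * q
        · rw [itin_bdy (S j) (hbdy j hjq), hu (j + (k+1))]
          show ItinEntry.int (U (j + (k+1))) = ItinEntry.int (S j - 1)
          rw [hallA j hjq]
          ring_nf
        · rw [hstrict j hjq, hu (j + (k+1))]
          rfl
      by_cases hallB : ∀ j, (∃ c : ℕ, j + 1 = c * q) → S j = U (j + (k + 1))
      · exfalso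
        refine (hK (k+1) (by omega)).1 ?_
        funext j
        show u (j + (k+1)) = entryPlus (itin s s j)
        by_cases hjq : ∃ c : ℕ, j + 1 = c * q
        · rw [itin_bdy (S j) (hbdy j hjq), hu (j + (k+1))]
          show ItinEntry.int (U (j + (k+1))) = ItinEntry.int (S j)
          rw [hallB j hjq]
        · rw [hstrict j hjq, hu (j + (k+1))]
          rfl
      · -- mixed bits: contradiction with the branch property
        exfalso
        push_neg at hallA hallB
        obtain ⟨j₂, hj₂q, hj₂v⟩ := hallA
        obtain ⟨j₁, hj₁q, hj₁v⟩ := hallB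
        have hbit2 : S j₂ = U (j₂ + (k+1)) := (hbit j₂ hj₂q).resolve_right hj₂v
        have hbit1 : S j₁ = U (j₁ + (k+1)) + 1 := (hbit j₁ hj₁q).resolve_left hj₁v
        obtain ⟨c₁, hc₁⟩ := hj₁q
        obtain ⟨c₂, hc₂⟩ := hj₂q
        set J₁ := j₁ + (k + 1) with hJ₁
        set J₂ := j₂ + (k + 1) with hJ₂
        set K : ℕ := max J₁ J₂ with hKdef
        obtain ⟨f, hf, hfpre⟩ := branch_inv s U (K + 1) (K + 1)
        have hC1 : ∀ d, d + (k + 1) ≤ K → ((f (d + (k + 1)) : ℝ) : Entry) = s d := by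
          intro d hd
          rw [hfpre (d + (k + 1)) (by omega)]
          have h1 : ((branch s U (d + (k+1)) : ℝ) : Entry) = xA (d + (k+1)) := rfl
          have h2 : xA (d + (k+1)) = shiftIter xA (k+1) d := rfl
          rw [h1, h2, htail]
        have hUp1 := (hf.2 J₁ (by omega)).2
        have hLo2 := (hf.2 J₂ (by omega)).1
        obtain ⟨ρ₁, hpre1, hlt1⟩ := hUp1
        -- the witness position must lie beyond K
        have hw₁ : K < ρ₁ + J₁ := by
          by_contra hcon
          push_neg at hcon
          have hent : shiftIter (iAddr f) J₁ ρ₁ = consAddr (((U J₁ + 1 : ℤ) : ℝ) : Entry) s ρ₁ := by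
            cases ρ₁ with
            | zero =>
              have h1 : shiftIter (iAddr f) J₁ 0 = ((f J₁ : ℝ) : Entry) := by
                show ((f (0 + J₁) : ℝ) : Entry) = _
                rw [Nat.zero_add]
              have h2 : ((f J₁ : ℝ) : Entry) = s j₁ := by
                have := hC1 j₁ (by omega)
                rw [hJ₁]
                exact this
              rw [h1, h2, hS j₁, hbit1]
              rfl
            | succ ρ' =>
              have h1 : shiftIter (iAddr f) J₁ (ρ' + 1) = ((f ((ρ' + 1) + J₁) : ℝ) : Entry) := rfl
              have h2 : (ρ' + 1) + J₁ = ((ρ' + 1) + j₁) + (k + 1) := by omega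
              have h3 : ((f ((ρ' + 1) + J₁) : ℝ) : Entry) = s ((ρ' + 1) + j₁) := by
                rw [h2]
                exact hC1 ((ρ' + 1) + j₁) (by omega)
              have h4 : s ((ρ' + 1) + j₁) = s ρ' := by
                have h5 : (ρ' + 1) + j₁ = ρ' + c₁ * q := by omega
                rw [h5]
                exact per_entry ρ' c₁
              rw [h1, h3, h4]
              rfl
          rw [hent] at hlt1
          exact lt_irrefl _ hlt1
        have hρ₁pos : 1 ≤ ρ₁ := by omega
        -- transport the strict drop to position J₂
        set ρ₂ : ℕ := (ρ₁ + J₁) - J₂ with hρ₂def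
        have hρ₂eq : ρ₂ + J₂ = ρ₁ + J₁ := by omega
        have hρ₂pos : 1 ≤ ρ₂ := by omega
        have hlt2 : addrLt (shiftIter (iAddr f) J₂) (consAddr ((U J₂ : ℝ) : Entry) s) := by
          refine ⟨ρ₂, ?_, ?_⟩
          · -- prefix equality
            intro ρ hρ
            cases ρ with
            | zero =>
              have h1 : shiftIter (iAddr f) J₂ 0 = ((f J₂ : ℝ) : Entry) := by
                show ((f (0 + J₂) : ℝ) : Entry) = _
                rw [Nat.zero_add]
              have h2 : ((f J₂ : ℝ) : Entry) = s j₂ := by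
                have := hC1 j₂ (by omega)
                rw [hJ₂]
                exact this
              rw [h1, h2, hS j₂, hbit2]
              rfl
            | succ ρ' =>
              have h1 : shiftIter (iAddr f) J₂ (ρ' + 1) = ((f ((ρ' + 1) + J₂) : ℝ) : Entry) := rfl
              have hrhs : consAddr ((U J₂ : ℝ) : Entry) s (ρ' + 1) = s ρ' := rfl
              rw [h1, hrhs]
              by_cases hw : (ρ' + 1) + J₂ ≤ K
              · have h2 : (ρ' + 1) + J₂ = ((ρ' + 1) + j₂) + (k + 1) := by omega
                have h3 : ((f ((ρ' + 1) + J₂) : ℝ) : Entry) = s ((ρ' + 1) + j₂) := by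
                  rw [h2]
                  exact hC1 ((ρ' + 1) + j₂) (by omega)
                have h4 : s ((ρ' + 1) + j₂) = s ρ' := by
                  have h5 : (ρ' + 1) + j₂ = ρ' + c₂ * q := by omega
                  rw [h5]
                  exact per_entry ρ' c₂
                rw [h3, h4]
              · -- beyond K: use the prefix equality of the J₁-comparison
                push_neg at hw
                set w := (ρ' + 1) + J₂ with hwdef
                set σ' : ℕ := w - J₁ with hσ'def
                have hσ'eq : σ' + J₁ = w := by omega
                have hσ'lt : σ' < ρ₁ := by omega
                have hσ'pos : 1 ≤ σ' := by omega
                have hp := hpre1 σ' hσ'lt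
                have h1' : shiftIter (iAddr f) J₁ σ' = ((f (σ' + J₁) : ℝ) : Entry) := rfl
                have h2' : consAddr (((U J₁ + 1 : ℤ) : ℝ) : Entry) s σ' = s (σ' - 1) := by
                  have : σ' = (σ' - 1) + 1 := by omega
                  rw [this]
                  rfl
                rw [h1', h2', hσ'eq] at hp
                rw [hp]
                -- s (σ' - 1) = s ρ'
                have h5 : (σ' - 1) + c₁ * q = ρ' + c₂ * q := by omega
                have h6 : s ((σ' - 1) + c₁ * q) = s (σ' - 1) := per_entry _ c₁
                have h7 : s (ρ' + c₂ * q) = s ρ' := per_entry _ c₂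
                rw [← h6, h5, h7]
          · -- strict inequality at ρ₂
            have h1 : shiftIter (iAddr f) J₂ ρ₂ = ((f (ρ₂ + J₂) : ℝ) : Entry) := rfl
            have h2 : consAddr ((U J₂ : ℝ) : Entry) s ρ₂ = s (ρ₂ - 1) := by
              have : ρ₂ = (ρ₂ - 1) + 1 := by omega
              rw [this]
              rfl
            have h3 : shiftIter (iAddr f) J₁ ρ₁ = ((f (ρ₁ + J₁) : ℝ) : Entry) := rfl
            have h4 : consAddr (((U J₁ + 1 : ℤ) : ℝ) : Entry) s ρ₁ = s (ρ₁ - 1) := by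
              have : ρ₁ = (ρ₁ - 1) + 1 := by omega
              rw [this]
              rfl
            rw [h3, h4] at hlt1
            have h5 : s (ρ₁ - 1) = s (ρ₂ - 1) := by
              have e1 : (ρ₂ - 1) + c₂ * q = (ρ₁ - 1) + c₁ * q := by omega
              have e2 : s ((ρ₂ - 1) + c₂ * q) = s (ρ₂ - 1) := per_entry _ c₂
              have e3 : s ((ρ₁ - 1) + c₁ * q) = s (ρ₁ - 1) := per_entry _ c₁
              rw [← e2, e1, e3]
            rw [h1, h2, hρ₂eq, ← h5]
            exact hlt1
        exact addrLt_irrefl _ (addrLt_of_le_of_lt hLo2 hlt2)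
    · -- s is not periodic: all tail entries are strict, K⁺(s) = σ^{k+1} u
      exfalso
      push_neg at hper
      refine (hK (k+1) (by omega)).1 ?_
      funext j
      show u (j + (k+1)) = entryPlus (itin s s j)
      have hne1 : consAddr ((U (j + (k+1)) : ℝ) : Entry) s ≠ shiftIter s j := by
        intro h
        exact hper (j+1) (by omega) (shiftIter_eq_s_of_eq_consAddr h.symm)
      have hne2 : shiftIter s j ≠ consAddr (((U (j + (k+1)) + 1 : ℤ) : ℝ) : Entry) s := by
        intro h
        exact hper (j+1) (by omega) (shiftIter_eq_s_of_eq_consAddr h)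
      have h1 : addrLt (consAddr ((U (j + (k+1)) : ℝ) : Entry) s) (shiftIter s j) :=
        (hTlow j).resolve_right (fun h => hne1 h)
      have h2 : addrLt (shiftIter s j) (consAddr (((U (j + (k+1)) + 1 : ℤ) : ℝ) : Entry) s) :=
        (hThigh j).resolve_right (fun h => hne2 h)
      rw [itin_int _ h1 h2, hu (j + (k+1))]
      rfl

end Stmt3Aux

/-- **Existence of Itineraries.** Let `s ∈ Ṡ` and let `u` be either an
infinite sequence of integers or a finite sequence of integers followed by `*`.
If for every `k ≥ 1` the shifted sequence `σ^k(u)` differs from both `K⁺(s)` and `K⁻(s)`,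
then there is an address `r ∈ S̄` with `itin_s(r) = u`. -/
theorem stmt3 (s : Addr) (hs : InSDot s) (u : ℕ → ItinEntry)
    (hshape : (∀ k, ∃ j : ℤ, u k = ItinEntry.int j) ∨
      (∃ n, 1 ≤ n ∧ (∀ k, k + 1 < n → ∃ j : ℤ, u k = ItinEntry.int j) ∧
        (∀ k, n ≤ k + 1 → u k = ItinEntry.star)))
    (hK : ∀ k, 1 ≤ k →
      (fun j => u (j + k)) ≠ itinPlus s s ∧ (fun j => u (j + k)) ≠ itinMinus s s) :
    ∃ r : Addr, InSBar r ∧ itin s r = u := by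
  classical
  rcases hshape with hinf | ⟨n, hn1, hints, hstars⟩
  · exact Stmt3Aux.infinite_case s hs u (fun k => (hinf k).choose)
      (fun k => (hinf k).choose_spec) hK
  · by_cases hn : n = 1
    · subst hn
      refine ⟨topAddr, Or.inr rfl, funext fun k => ?_⟩
      rw [Stmt3Aux.itin_star (Stmt3Aux.shiftIter_top k), hstars k (by omega)]
    · have hn2 : 2 ≤ n := by omega
      refine Stmt3Aux.finite_case s u n hn2
        (fun k => if h : k + 1 < n then (hints k h).choose else 0) ?_ hstars hK
      intro k hk
      simp only [dif_pos hk]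
      exact (hints k hk).choose_spec

end
end
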